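/- arXiv:2002.05403 — 6 statements merged into one kernel-verified Lean document; each statement's English description precedes it below -/
import Mathlib

section
/- Let V be a module over ℂ and work in the exterior algebra Λ(V) over ℂ, writing ∧ for the product and regarding elements of V as degree-one elements. Let ω¹, ω², θ¹₁, θ¹₂, θ²₁, θ²₂ ∈ V and set ω = ω¹ + i·ω², ζ = (θ¹₁ − θ²₂) + i·(θ¹₂ + θ²₁), and Dω = −(θ¹₁∧ω¹ + θ¹₂∧ω²) − i·(θ²₁∧ω¹ + θ²₂∧ω²). Then Dω ∧ ω ∧ ζ = 0. (This is one of the two computations showing that the almost complex structure J on Z whose (1,0)-forms pull back to the span of ω and ζ is integrable.) -/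
open ExteriorAlgebra

/-- In the exterior algebra over `ℂ` of a `ℂ`-module `V`, with
`ω = ω¹ + i·ω²`, `ζ = (θ¹₁ − θ²₂) + i·(θ¹₂ + θ²₁)` and
`Dω = −(θ¹₁∧ω¹ + θ¹₂∧ω²) − i·(θ²₁∧ω¹ + θ²₂∧ω²)`, one has `Dω ∧ ω ∧ ζ = 0`
(one of the two computations showing that the almost complex structure `J` is integrable). -/
theorem stmt6 (V : Type*) [AddCommGroup V] [Module ℂ V]
    (ω1 ω2 θ11 θ12 θ21 θ22 : V) :
    let ι : V →ₗ[ℂ] ExteriorAlgebra ℂ V := ExteriorAlgebra.ι ℂ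
    let ω : ExteriorAlgebra ℂ V := ι (ω1 + Complex.I • ω2)
    let ζ : ExteriorAlgebra ℂ V := ι ((θ11 - θ22) + Complex.I • (θ12 + θ21))
    let Dω : ExteriorAlgebra ℂ V :=
      -(ι θ11 * ι ω1 + ι θ12 * ι ω2) - Complex.I • (ι θ21 * ι ω1 + ι θ22 * ι ω2)
    Dω * ω * ζ = 0 := by
  intro ι ω ζ Dω
  have swap : ∀ u v : V, ι u * ι v = -(ι v * ι u) := fun u v =>
    eq_neg_of_add_eq_zero_left (ExteriorAlgebra.ι_add_mul_swap u v)
  have sq : ∀ u : V, ι u * ι u = 0 := fun u => ExteriorAlgebra.ι_sq_zero u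
  set z : V := (θ11 - θ22) + Complex.I • (θ12 + θ21) with hz
  have h1 : Dω * ω = (-Complex.I) • (ι z * (ι ω1 * ι ω2)) := by
    simp only [Dω, ω, hz, map_add, map_sub, map_smul]
    simp only [mul_add, add_mul, neg_mul, mul_neg, sub_mul, mul_sub,
      smul_mul_assoc, mul_smul_comm, mul_assoc, sq, mul_zero, smul_zero,
      neg_zero, add_zero, zero_add]
    rw [show ι ω2 * ι ω1 = -(ι ω1 * ι ω2) from swap _ _]
    simp only [mul_neg, smul_neg, neg_neg]
    match_scalars <;> norm_num [Complex.I_sq]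
  rw [h1, smul_mul_assoc]
  have h2 : ι z * (ι ω1 * ι ω2) * ζ = 0 := by
    show ι z * (ι ω1 * ι ω2) * ι z = 0
    rw [mul_assoc, mul_assoc, show ι ω2 * ι z = -(ι z * ι ω2) from swap _ _]
    rw [mul_neg, ← mul_assoc, show ι ω1 * ι z = -(ι z * ι ω1) from swap _ _]
    rw [neg_mul, neg_neg, ← mul_assoc, ← mul_assoc, sq z, zero_mul, zero_mul]
  rw [h2, smul_zero]
end

section
/- Let V be a module over ℂ and work in the exterior algebra Λ(V) over ℂ, writing ∧ for the product and regarding elements of V as degree-one elements. Let ω¹, ω², θ¹₁, θ¹₂, θ²₁, θ²₂ ∈ V, let R¹₁, R¹₂, R²₁, R²₂ ∈ ℂ, and set ω = ω¹ + i·ω², ζ = (θ¹₁ − θ²₂) + i·(θ¹₂ + θ²₁), Dθⁱⱼ = −(θⁱ₁∧θ¹ⱼ + θⁱ₂∧θ²ⱼ) + Rⁱⱼ·(ω¹∧ω²) (the expression for dθⁱⱼ forced by the second structure equation with semibasic curvature), and Dζ = (Dθ¹₁ − Dθ²₂) + i·(Dθ¹₂ + Dθ²₁). Then Dζ ∧ ω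 ∧ ζ = 0. (This is the other computation showing that the almost complex structure J whose (1,0)-forms are spanned by ω and ζ is integrable.) -/
/-!
The quadratic part of `Dζ` factors through `ζ`: it equals `ζ ∧ μ` with `μ = i(θ²₁ − θ¹₂)`, so
`Dζ = ζ ∧ μ + K · ω¹∧ω²` with `K = (R¹₁ − R²₂) + i(R¹₂ + R²₁)`. In `Dζ ∧ ω ∧ ζ` the first term
contains `ζ` twice and the second contains the three 1-forms `ω¹, ω², ω` from a 2-dimensional span,
so both vanish.
-/

open ExteriorAlgebra

namespace ExteriorAlgebra

variable {R M : Type*} [CommRing R] [AddCommGroup M] [Module R M]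

theorem ι_mul_ι_swap (x y : M) : ι R y * ι R x = -(ι R x * ι R y) :=
  eq_neg_of_add_eq_zero_right (ι_add_mul_swap x y)

theorem ι_mul_ι_mul_ι_self (x y : M) : ι R x * ι R y * ι R x = 0 := by
  rw [mul_assoc, ι_mul_ι_swap, mul_neg, ← mul_assoc, ι_sq_zero, zero_mul, neg_zero]

theorem ι_mul_ι_mul_ι_mul_ι_self (x y z : M) : ι R x * ι R y * ι R z * ι R x = 0 := by
  rw [mul_assoc, ι_mul_ι_swap x z, mul_neg, ← mul_assoc, ι_mul_ι_mul_ι_self, zero_mul, neg_zero]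

theorem ι_mul_ι_mul_ι_eq_zero_of_mem_span {x y z : M} (hz : z ∈ Submodule.span R {x, y}) :
    ι R x * ι R y * ι R z = 0 := by
  obtain ⟨a, b, rfl⟩ := Submodule.mem_span_pair.mp hz
  rw [map_add, map_smul, map_smul, mul_add, mul_smul_comm, mul_smul_comm, ι_mul_ι_mul_ι_self,
    mul_assoc, ι_sq_zero, mul_zero, smul_zero, smul_zero, add_zero]

end ExteriorAlgebra

theorem complexified_structure_equation {V : Type*} [AddCommGroup V] [Module ℂ V]
    (a b c d : V) (R11 R12 R21 R22 : ℂ) (Ω : ExteriorAlgebra ℂ V) :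
    let ι : V →ₗ[ℂ] ExteriorAlgebra ℂ V := ExteriorAlgebra.ι ℂ
    ((-(ι a * ι a + ι b * ι c) + R11 • Ω) - (-(ι c * ι b + ι d * ι d) + R22 • Ω))
      + Complex.I • ((-(ι a * ι b + ι b * ι d) + R12 • Ω) + (-(ι c * ι a + ι d * ι c) + R21 • Ω))
      = ι ((a - d) + Complex.I • (b + c)) * ι (Complex.I • (c - b))
        + ((R11 - R22) + Complex.I * (R12 + R21)) • Ω := by
  intro ι
  simp only [ι, map_add, map_sub, map_smul, mul_add, add_mul, sub_mul, mul_sub, smul_mul_assoc,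
    mul_smul_comm, ι_sq_zero, ι_mul_ι_swap (R := ℂ) b c, ι_mul_ι_swap (R := ℂ) a c,
    ι_mul_ι_swap (R := ℂ) c d, ι_mul_ι_swap (R := ℂ) b d]
  match_scalars <;> ring_nf
  rw [Complex.I_sq]
  norm_num

/-- In the exterior algebra over `ℂ` of a `ℂ`-module `V`, with
`ω = ω¹ + i·ω²`, `ζ = (θ¹₁ − θ²₂) + i·(θ¹₂ + θ²₁)`,
`Dθⁱⱼ = −(θⁱ₁∧θ¹ⱼ + θⁱ₂∧θ²ⱼ) + Rⁱⱼ·(ω¹∧ω²)` (the expression for `dθⁱⱼ` forced by the second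
structure equation with semibasic curvature) and `Dζ = (Dθ¹₁ − Dθ²₂) + i·(Dθ¹₂ + Dθ²₁)`,
one has `Dζ ∧ ω ∧ ζ = 0` (the other computation showing that `J` is integrable). -/
theorem stmt7 (V : Type*) [AddCommGroup V] [Module ℂ V]
    (ω1 ω2 θ11 θ12 θ21 θ22 : V) (R11 R12 R21 R22 : ℂ) :
    let ι : V →ₗ[ℂ] ExteriorAlgebra ℂ V := ExteriorAlgebra.ι ℂ
    let ω : ExteriorAlgebra ℂ V := ι (ω1 + Complex.I • ω2)
    let ζ : ExteriorAlgebra ℂ V := ι ((θ11 - θ22) + Complex.I • (θ12 + θ21))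
    let Dθ11 : ExteriorAlgebra ℂ V :=
      -(ι θ11 * ι θ11 + ι θ12 * ι θ21) + R11 • (ι ω1 * ι ω2)
    let Dθ12 : ExteriorAlgebra ℂ V :=
      -(ι θ11 * ι θ12 + ι θ12 * ι θ22) + R12 • (ι ω1 * ι ω2)
    let Dθ21 : ExteriorAlgebra ℂ V :=
      -(ι θ21 * ι θ11 + ι θ22 * ι θ21) + R21 • (ι ω1 * ι ω2)
    let Dθ22 : ExteriorAlgebra ℂ V :=
      -(ι θ21 * ι θ12 + ι θ22 * ι θ22) + R22 • (ι ω1 * ι ω2)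
    let Dζ : ExteriorAlgebra ℂ V := (Dθ11 - Dθ22) + Complex.I • (Dθ12 + Dθ21)
    Dζ * ω * ζ = 0 := by
  intro ι ω ζ Dθ11 Dθ12 Dθ21 Dθ22 Dζ
  have hDζ : Dζ = ζ * ι (Complex.I • (θ21 - θ12))
      + ((R11 - R22) + Complex.I * (R12 + R21)) • (ι ω1 * ι ω2) :=
    complexified_structure_equation θ11 θ12 θ21 θ22 R11 R12 R21 R22 (ι ω1 * ι ω2)
  have hζ : ζ * ι (Complex.I • (θ21 - θ12)) * ω * ζ = 0 := ι_mul_ι_mul_ι_mul_ι_self _ _ _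
  have hω : ι ω1 * ι ω2 * ω = 0 :=
    ι_mul_ι_mul_ι_eq_zero_of_mem_span <|
      Submodule.mem_span_pair.mpr ⟨1, Complex.I, by rw [one_smul]⟩
  rw [hDζ, add_mul, add_mul, hζ, smul_mul_assoc, hω, smul_zero, zero_mul, zero_add]
end

section
/- Let V be a module over ℂ and work in the exterior algebra Λ(V) over ℂ. Let ψ¹₁, ψ²₁, ω¹, ω² ∈ V, a₁, a₂, b₁, b₂ ∈ ℝ, and define the 2×2 matrix θ with entries in V by θ = [[ψ¹₁, −ψ²₁],[ψ²₁, ψ¹₁]] + [[b₁ω¹, b₁ω²],[b₂ω¹, b₂ω²]] − (1/3)·[[2b₁ω¹ + b₂ω², b₂ω¹],[b₁ω², b₁ω¹ + 2b₂ω²]] + [[a₁ω¹ − a₂ω², −a₂ω¹ − a₁ω²],[−a₂ω¹ − a₁ω², −a₁ω¹ + a₂ω²]]. Set ω = ω¹ + i·ω², ω̄ = ω¹ − i·ω² and ζ = (θ¹₁ − θ²₂) + i·(θ¹₂ + θ²₁). Then ζ = (2/3)·(b₁ + i·b₂)·ω + 2·(a₁ − i·a₂)·ω̄; consequently ω ∧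 ζ = 2·(a₁ − i·a₂)·ω ∧ ω̄ and ω ∧ ζ̄ = (2/3)·(b₁ − i·b₂)·ω ∧ ω̄, where ζ̄ = (θ¹₁ − θ²₂) − i·(θ¹₂ + θ²₁). (This is the key computation in the proof of the characterisation of metrisable projective structures: ω∧ζ = 0 iff the trace-free part φ vanishes, and ω∧ζ̄ = 0 iff the Weyl 1-form β vanishes.) -/
open ExteriorAlgebra

/-- With `θ` the 2×2 matrix of 1-forms
`θ = [[ψ¹₁, −ψ²₁],[ψ²₁, ψ¹₁]] + [[b₁ω¹, b₁ω²],[b₂ω¹, b₂ω²]]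
  − (1/3)·[[2b₁ω¹ + b₂ω², b₂ω¹],[b₁ω², b₁ω¹ + 2b₂ω²]]
  + [[a₁ω¹ − a₂ω², −a₂ω¹ − a₁ω²],[−a₂ω¹ − a₁ω², −a₁ω¹ + a₂ω²]]`
and `ω = ω¹ + i·ω²`, `ω̄ = ω¹ − i·ω²`, `ζ = (θ¹₁ − θ²₂) + i·(θ¹₂ + θ²₁)`,
`ζ̄ = (θ¹₁ − θ²₂) − i·(θ¹₂ + θ²₁)`, one has `ζ = (2/3)·(b₁ + i·b₂)·ω + 2·(a₁ − i·a₂)·ω̄`;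
consequently `ω ∧ ζ = 2·(a₁ − i·a₂)·ω ∧ ω̄` and `ω ∧ ζ̄ = (2/3)·(b₁ − i·b₂)·ω ∧ ω̄`. -/
theorem stmt11 (V : Type*) [AddCommGroup V] [Module ℂ V]
    (ψ11 ψ21 ω1 ω2 : V) (a1 a2 b1 b2 : ℝ) :
    let θ11 : V := ψ11 + (b1 : ℂ) • ω1
      - (1/3 : ℂ) • ((2 * b1 : ℂ) • ω1 + (b2 : ℂ) • ω2)
      + ((a1 : ℂ) • ω1 - (a2 : ℂ) • ω2)
    let θ12 : V := -ψ21 + (b1 : ℂ) • ω2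
      - (1/3 : ℂ) • ((b2 : ℂ) • ω1)
      + (-(a2 : ℂ) • ω1 - (a1 : ℂ) • ω2)
    let θ21 : V := ψ21 + (b2 : ℂ) • ω1
      - (1/3 : ℂ) • ((b1 : ℂ) • ω2)
      + (-(a2 : ℂ) • ω1 - (a1 : ℂ) • ω2)
    let θ22 : V := ψ11 + (b2 : ℂ) • ω2
      - (1/3 : ℂ) • ((b1 : ℂ) • ω1 + (2 * b2 : ℂ) • ω2)
      + (-(a1 : ℂ) • ω1 + (a2 : ℂ) • ω2)
    let ω : V := ω1 + Complex.I • ω2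
    let ωbar : V := ω1 - Complex.I • ω2
    let ζ : V := (θ11 - θ22) + Complex.I • (θ12 + θ21)
    let ζbar : V := (θ11 - θ22) - Complex.I • (θ12 + θ21)
    let ι : V →ₗ[ℂ] ExteriorAlgebra ℂ V := ExteriorAlgebra.ι ℂ
    ζ = ((2/3 : ℂ) * ((b1 : ℂ) + Complex.I * (b2 : ℂ))) • ω
        + ((2 : ℂ) * ((a1 : ℂ) - Complex.I * (a2 : ℂ))) • ωbar ∧
    ι ω * ι ζ = ((2 : ℂ) * ((a1 : ℂ) - Complex.I * (a2 : ℂ))) • (ι ω * ι ωbar) ∧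
    ι ω * ι ζbar = ((2/3 : ℂ) * ((b1 : ℂ) - Complex.I * (b2 : ℂ))) • (ι ω * ι ωbar) := by
  intro θ11 θ12 θ21 θ22 ω ωbar ζ ζbar ι
  have hI2 : Complex.I * Complex.I = -1 := Complex.I_mul_I
  have hζ : ζ = ((2/3 : ℂ) * ((b1 : ℂ) + Complex.I * (b2 : ℂ))) • ω
      + ((2 : ℂ) * ((a1 : ℂ) - Complex.I * (a2 : ℂ))) • ωbar := by
    simp only [ζ, θ11, θ12, θ21, θ22, ω, ωbar]
    match_scalars <;> ring_nf <;> simp [hI2] <;> ring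
  have hζbar : ζbar = ((2 : ℂ) * ((a1 : ℂ) + Complex.I * (a2 : ℂ))) • ω
      + ((2/3 : ℂ) * ((b1 : ℂ) - Complex.I * (b2 : ℂ))) • ωbar := by
    simp only [ζbar, θ11, θ12, θ21, θ22, ω, ωbar]
    match_scalars <;> ring_nf <;> simp [hI2] <;> ring
  have hsq : ι ω * ι ω = 0 := ExteriorAlgebra.ι_sq_zero ω
  refine ⟨hζ, ?_, ?_⟩
  · rw [hζ]
    simp only [map_add, map_smul, mul_add, Algebra.mul_smul_comm, hsq, smul_zero, zero_add]
  · rw [hζbar]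
    simp only [map_add, map_smul, mul_add, Algebra.mul_smul_comm, hsq, smul_zero, zero_add]
end

section
/- Let E be a real normed vector space, s ⊆ E an open connected set, Ξ : E → Matrix (Fin 3) (Fin 3) ℝ differentiable at every point of s with Ξ(x) invertible for all x ∈ s, and H : E → Matrix (Fin 3) (Fin 3) ℝ differentiable at every point of s. Suppose that for all x ∈ s and v ∈ E: fderiv H x v + ϑ(x)(v)·H(x) + H(x)·(ϑ(x)(v))ᵀ = 0, where ϑ(x)(v) = Ξ(x)⁻¹ · (fderiv Ξ x v). Then the map x ↦ Ξ(x)·H(x)·Ξ(x)ᵀ is constant on s; equivalently, H(x) = Ξ(x)⁻¹·C·(Ξ(x)⁻¹)ᵀ on s for the constant matrix C = Ξ(x₀)·H(x₀)·Ξ(x₀)ᵀ, any x₀ ∈ s. (This shows every solution of Liouville's system dH + ϑH + Hϑᵗ = 0 is of the form H = Ξ⁻¹·C·(Ξ⁻¹)ᵀ.) -/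
/-! With `ϑ = Ξ⁻¹ dΞ`, the product rule gives `d(Ξ H Ξᵀ) = Ξ (dH + ϑ H + H ϑᵀ) Ξᵀ`, so Liouville's
system says exactly that `Ξ H Ξᵀ` has vanishing derivative. On an open connected set it is then
constant, and `H` is recovered by undoing the conjugation by the invertible `Ξ`. -/

open Matrix

attribute [local instance] Matrix.normedAddCommGroup Matrix.normedSpace

-- The sup norm on matrices is not submultiplicative, so `HasFDerivAt.mul` is unavailable;
-- multiplication is differentiated as a continuous bilinear map instead.
namespace Matrix

variable {𝕜 : Type*} [NontriviallyNormedField 𝕜] [CompleteSpace 𝕜]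
  {l m n : Type*} [Fintype l] [Fintype m] [Fintype n]

noncomputable def mulCLM : Matrix l m 𝕜 →L[𝕜] Matrix m n 𝕜 →L[𝕜] Matrix l n 𝕜 :=
  LinearMap.toContinuousLinearMap
    (LinearMap.toContinuousLinearMap.toLinearMap ∘ₗ mulLinearMap 𝕜)

noncomputable def transposeCLM : Matrix m n 𝕜 →L[𝕜] Matrix n m 𝕜 :=
  LinearMap.toContinuousLinearMap (transposeLinearEquiv m n 𝕜 𝕜).toLinearMap

end Matrix

section MatrixCalculus

variable {𝕜 : Type*} [NontriviallyNormedField 𝕜] [CompleteSpace 𝕜]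
  {E : Type*} [NormedAddCommGroup E] [NormedSpace 𝕜 E] {x : E}
  {l m n : Type*} [Fintype l] [Fintype m] [Fintype n]
  {f : E → Matrix l m 𝕜} {g : E → Matrix m n 𝕜}

theorem DifferentiableAt.matrix_mul (hf : DifferentiableAt 𝕜 f x) (hg : DifferentiableAt 𝕜 g x) :
    DifferentiableAt 𝕜 (fun y => f y * g y) x :=
  (mulCLM.hasFDerivAt_of_bilinear hf.hasFDerivAt hg.hasFDerivAt).differentiableAt

theorem fderiv_matrix_mul_apply (hf : DifferentiableAt 𝕜 f x) (hg : DifferentiableAt 𝕜 g x)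
    (v : E) :
    fderiv 𝕜 (fun y => f y * g y) x v = fderiv 𝕜 f x v * g x + f x * fderiv 𝕜 g x v := by
  have h : HasFDerivAt (fun y => f y * g y) _ x :=
    mulCLM.hasFDerivAt_of_bilinear hf.hasFDerivAt hg.hasFDerivAt
  rw [h.fderiv]
  exact add_comm _ _

theorem DifferentiableAt.matrix_transpose (hf : DifferentiableAt 𝕜 f x) :
    DifferentiableAt 𝕜 (fun y => (f y)ᵀ) x :=
  (transposeCLM : Matrix l m 𝕜 →L[𝕜] Matrix m l 𝕜).differentiableAt.comp x hf

theorem fderiv_matrix_transpose_apply (hf : DifferentiableAt 𝕜 f x) (v : E) :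
    fderiv 𝕜 (fun y => (f y)ᵀ) x v = (fderiv 𝕜 f x v)ᵀ := by
  have h : HasFDerivAt (fun y => (f y)ᵀ) _ x :=
    (transposeCLM : Matrix l m 𝕜 →L[𝕜] Matrix m l 𝕜).hasFDerivAt.comp x hf.hasFDerivAt
  rw [h.fderiv]
  rfl

end MatrixCalculus

namespace Matrix

variable {n R : Type*} [Fintype n] [DecidableEq n] [CommRing R] {X : Matrix n n R}

theorem mul_liouville_mul_transpose (hX : IsUnit X) (X' H H' : Matrix n n R) :
    X * (H' + X⁻¹ * X' * H + H * (X⁻¹ * X')ᵀ) * Xᵀ =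
      X' * H * Xᵀ + X * H' * Xᵀ + X * H * X'ᵀ := by
  have hdet : IsUnit X.det := (isUnit_iff_isUnit_det X).mp hX
  have hXT : X⁻¹ᵀ * Xᵀ = 1 := by rw [← transpose_mul, mul_nonsing_inv X hdet, transpose_one]
  simp only [Matrix.mul_add, Matrix.add_mul, transpose_mul, ← Matrix.mul_assoc,
    mul_nonsing_inv X hdet, Matrix.one_mul]
  rw [Matrix.mul_assoc (X * H * X'ᵀ), hXT, Matrix.mul_one]
  abel

theorem nonsing_inv_mul_mul_transpose_cancel (hX : IsUnit X) (H : Matrix n n R) :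
    X⁻¹ * (X * H * Xᵀ) * X⁻¹ᵀ = H := by
  have hdet : IsUnit X.det := (isUnit_iff_isUnit_det X).mp hX
  have hdetT : IsUnit Xᵀ.det := by rwa [det_transpose]
  rw [transpose_nonsing_inv, Matrix.mul_assoc X, nonsing_inv_mul_cancel_left X _ hdet,
    mul_nonsing_inv_cancel_right _ _ hdetT]

end Matrix

theorem fderiv_mul_mul_transpose_eq_zero_of_liouville
    {𝕜 : Type*} [NontriviallyNormedField 𝕜] [CompleteSpace 𝕜]
    {E : Type*} [NormedAddCommGroup E] [NormedSpace 𝕜 E] {x : E}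
    {n : Type*} [Fintype n] [DecidableEq n] {Ξ H : E → Matrix n n 𝕜}
    (hΞ : DifferentiableAt 𝕜 Ξ x) (hH : DifferentiableAt 𝕜 H x) (hΞx : IsUnit (Ξ x))
    (hLiouville : ∀ v, fderiv 𝕜 H x v + ((Ξ x)⁻¹ * fderiv 𝕜 Ξ x v) * H x
      + H x * ((Ξ x)⁻¹ * fderiv 𝕜 Ξ x v)ᵀ = 0) :
    fderiv 𝕜 (fun y => Ξ y * H y * (Ξ y)ᵀ) x = 0 := by
  ext1 v
  rw [fderiv_matrix_mul_apply (hΞ.matrix_mul hH) hΞ.matrix_transpose,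
    fderiv_matrix_mul_apply hΞ hH, fderiv_matrix_transpose_apply hΞ, Matrix.add_mul,
    ← mul_liouville_mul_transpose hΞx, hLiouville, Matrix.mul_zero, Matrix.zero_mul]
  rfl

/-- Let `E` be a real normed vector space, `s ⊆ E` open and connected,
`Ξ : E → Matrix (Fin 3) (Fin 3) ℝ` differentiable on `s` with `Ξ(x)` invertible on `s`,
and `H` differentiable on `s` satisfying Liouville's system
`fderiv H x v + ϑ(x)(v)·H(x) + H(x)·(ϑ(x)(v))ᵀ = 0` with `ϑ(x)(v) = Ξ(x)⁻¹·(fderiv Ξ x v)`.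
Then `x ↦ Ξ(x)·H(x)·Ξ(x)ᵀ` is constant on `s`; equivalently
`H(x) = Ξ(x)⁻¹·C·(Ξ(x)⁻¹)ᵀ` on `s` with `C = Ξ(x₀)·H(x₀)·Ξ(x₀)ᵀ` for any `x₀ ∈ s`. -/
theorem stmt13 (E : Type*) [NormedAddCommGroup E] [NormedSpace ℝ E]
    (s : Set E) (hs : IsOpen s) (hconn : IsConnected s)
    (Ξ : E → Matrix (Fin 3) (Fin 3) ℝ)
    (hΞdiff : ∀ x ∈ s, DifferentiableAt ℝ Ξ x)
    (hΞinv : ∀ x ∈ s, IsUnit (Ξ x))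
    (H : E → Matrix (Fin 3) (Fin 3) ℝ)
    (hHdiff : ∀ x ∈ s, DifferentiableAt ℝ H x)
    (hLiouville : ∀ x ∈ s, ∀ v : E,
      fderiv ℝ H x v + ((Ξ x)⁻¹ * fderiv ℝ Ξ x v) * H x
        + H x * ((Ξ x)⁻¹ * fderiv ℝ Ξ x v)ᵀ = 0) :
    ∀ x₀ ∈ s, ∀ x ∈ s,
      Ξ x * H x * (Ξ x)ᵀ = Ξ x₀ * H x₀ * (Ξ x₀)ᵀ ∧
      H x = (Ξ x)⁻¹ * (Ξ x₀ * H x₀ * (Ξ x₀)ᵀ) * ((Ξ x)⁻¹)ᵀ := by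
  intro x₀ hx₀ x hx
  have hdiff : DifferentiableOn ℝ (fun y => Ξ y * H y * (Ξ y)ᵀ) s := fun y hy =>
    (((hΞdiff y hy).matrix_mul (hHdiff y hy)).matrix_mul
      (hΞdiff y hy).matrix_transpose).differentiableWithinAt
  have hconst : Ξ x * H x * (Ξ x)ᵀ = Ξ x₀ * H x₀ * (Ξ x₀)ᵀ :=
    hs.is_const_of_fderiv_eq_zero hconn.isPreconnected hdiff
      (fun y hy => fderiv_mul_mul_transpose_eq_zero_of_liouville (hΞdiff y hy) (hHdiff y hy)
        (hΞinv y hy) (hLiouville y hy)) hx hx₀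
  exact ⟨hconst, by rw [← hconst, nonsing_inv_mul_mul_transpose_cancel (hΞinv x hx)]⟩
end

section
/- Let E be a real normed vector space, U ⊆ E open, and Ξ : E → Matrix (Fin 3) (Fin 3) ℝ twice continuously differentiable on U with Ξ(y) invertible for every y ∈ U. For y ∈ U and v ∈ E set ϑ(y)(v) = Ξ(y)⁻¹ · (fderiv Ξ y v). Then for every x ∈ U and all v, w ∈ E: fderiv (y ↦ ϑ(y)(w)) x v − fderiv (y ↦ ϑ(y)(v)) x w + ϑ(x)(v)·ϑ(x)(w) − ϑ(x)(w)·ϑ(x)(v) = 0. (This is the Maurer–Cartan identity dϑ + ϑ∧ϑ = 0 for ϑ = Ξ⁻¹ dΞ, used to integrate Liouville's system on the sphere.) -/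
/-!
Differentiating `Ξ⁻¹ * Ξ = 1` gives `∂_v(Ξ⁻¹) = -Ξ⁻¹ (∂_vΞ) Ξ⁻¹`, hence
`∂_v(ϑ w) = Ξ⁻¹ ∂_v∂_w Ξ - ϑ(v) ϑ(w)`. In `∂_v(ϑ w) - ∂_w(ϑ v)` the second-derivative terms cancel
by symmetry of the second derivative of a `C²` map, and what remains is `-[ϑ(v), ϑ(w)]`.
-/

attribute [local instance] Matrix.normedAddCommGroup Matrix.normedSpace

section SecondDerivative

variable {𝕜 : Type*} [RCLike 𝕜] {E : Type*} [NormedAddCommGroup E] [NormedSpace 𝕜 E]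
  {F : Type*} [NormedAddCommGroup F] [NormedSpace 𝕜 F] {f : E → F} {x : E}

theorem ContDiffAt.hasFDerivAt_fderiv_apply (hf : ContDiffAt 𝕜 2 f x) (w : E) :
    HasFDerivAt (fun y => fderiv 𝕜 f y w)
      ((ContinuousLinearMap.apply 𝕜 F w).comp (fderiv 𝕜 (fderiv 𝕜 f) x)) x :=
  (ContinuousLinearMap.apply 𝕜 F w).hasFDerivAt.comp x
    ((hf.fderiv_right (m := 1) one_add_one_eq_two.le).differentiableAt one_ne_zero).hasFDerivAt

theorem ContDiffAt.fderiv_fderiv_apply_comm (hf : ContDiffAt 𝕜 2 f x) (v w : E) :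
    fderiv 𝕜 (fun y => fderiv 𝕜 f y w) x v = fderiv 𝕜 (fun y => fderiv 𝕜 f y v) x w := by
  rw [(hf.hasFDerivAt_fderiv_apply w).fderiv, (hf.hasFDerivAt_fderiv_apply v).fderiv]
  exact hf.isSymmSndFDerivAt minSmoothness_of_isRCLikeNormedField.le v w

end SecondDerivative

section MaurerCartan

open scoped Ring

variable {𝕜 : Type*} [NontriviallyNormedField 𝕜] {E : Type*} [NormedAddCommGroup E]
  [NormedSpace 𝕜 E] {R : Type*} [NormedRing R] [NormedAlgebra 𝕜 R] [HasSummableGeomSeries R]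
  {Ξ Φ : E → R} {x : E}

theorem fderiv_ringInverse_mul_apply (hΞ : DifferentiableAt 𝕜 Ξ x) (hx : IsUnit (Ξ x))
    (hΦ : DifferentiableAt 𝕜 Φ x) (v : E) :
    fderiv 𝕜 (fun y => (Ξ y)⁻¹ʳ * Φ y) x v
      = (Ξ x)⁻¹ʳ * fderiv 𝕜 Φ x v - (Ξ x)⁻¹ʳ * fderiv 𝕜 Ξ x v * (Ξ x)⁻¹ʳ * Φ x := by
  obtain ⟨u, hu⟩ := hx
  have hinv : HasFDerivAt (fun y => (Ξ y)⁻¹ʳ)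
      ((-ContinuousLinearMap.mulLeftRight 𝕜 R ↑u⁻¹ ↑u⁻¹).comp (fderiv 𝕜 Ξ x)) x :=
    (hu ▸ hasFDerivAt_ringInverse u).comp x hΞ.hasFDerivAt
  rw [(hinv.fun_mul' hΦ.hasFDerivAt).fderiv, ← hu, Ring.inverse_unit]
  simp only [ContinuousLinearMap.neg_comp, smul_neg, _root_.add_apply,
    _root_.smul_apply, smul_eq_mul, _root_.neg_apply,
    ContinuousLinearMap.comp_apply, ContinuousLinearMap.mulLeftRight_apply,
    MulOpposite.smul_eq_mul_unop, MulOpposite.unop_op]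
  abel

theorem maurerCartan_ringInverse (hΞ : DifferentiableAt 𝕜 Ξ x) (hx : IsUnit (Ξ x)) {v w : E}
    (hv : DifferentiableAt 𝕜 (fun y => fderiv 𝕜 Ξ y v) x)
    (hw : DifferentiableAt 𝕜 (fun y => fderiv 𝕜 Ξ y w) x)
    (hsymm : fderiv 𝕜 (fun y => fderiv 𝕜 Ξ y w) x v = fderiv 𝕜 (fun y => fderiv 𝕜 Ξ y v) x w) :
    fderiv 𝕜 (fun y => (Ξ y)⁻¹ʳ * fderiv 𝕜 Ξ y w) x v
        - fderiv 𝕜 (fun y => (Ξ y)⁻¹ʳ * fderiv 𝕜 Ξ y v) x w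
        + ((Ξ x)⁻¹ʳ * fderiv 𝕜 Ξ x v) * ((Ξ x)⁻¹ʳ * fderiv 𝕜 Ξ x w)
        - ((Ξ x)⁻¹ʳ * fderiv 𝕜 Ξ x w) * ((Ξ x)⁻¹ʳ * fderiv 𝕜 Ξ x v) = 0 := by
  rw [fderiv_ringInverse_mul_apply hΞ hx hw, fderiv_ringInverse_mul_apply hΞ hx hv, hsymm]
  noncomm_ring

end MaurerCartan

/-- Let `E` be a real normed vector space, `U ⊆ E` open, and
`Ξ : E → Matrix (Fin 3) (Fin 3) ℝ` twice continuously differentiable on `U` with `Ξ(y)`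
invertible for every `y ∈ U`. With `ϑ(y)(v) = Ξ(y)⁻¹·(fderiv Ξ y v)`, for every `x ∈ U` and
all `v, w ∈ E`:
`fderiv (y ↦ ϑ(y)(w)) x v − fderiv (y ↦ ϑ(y)(v)) x w + ϑ(x)(v)·ϑ(x)(w) − ϑ(x)(w)·ϑ(x)(v) = 0`,
i.e. the Maurer–Cartan identity `dϑ + ϑ∧ϑ = 0` for `ϑ = Ξ⁻¹ dΞ`. -/
theorem stmt14 (E : Type*) [NormedAddCommGroup E] [NormedSpace ℝ E]
    (U : Set E) (hU : IsOpen U)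
    (Ξ : E → Matrix (Fin 3) (Fin 3) ℝ)
    (hΞ : ContDiffOn ℝ 2 Ξ U)
    (hΞinv : ∀ y ∈ U, IsUnit (Ξ y)) :
    ∀ x ∈ U, ∀ v w : E,
      fderiv ℝ (fun y => (Ξ y)⁻¹ * fderiv ℝ Ξ y w) x v
        - fderiv ℝ (fun y => (Ξ y)⁻¹ * fderiv ℝ Ξ y v) x w
        + ((Ξ x)⁻¹ * fderiv ℝ Ξ x v) * ((Ξ x)⁻¹ * fderiv ℝ Ξ x w)
        - ((Ξ x)⁻¹ * fderiv ℝ Ξ x w) * ((Ξ x)⁻¹ * fderiv ℝ Ξ x v) = 0 := by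
  intro x hx v w
  have hΞx : ContDiffAt ℝ 2 Ξ x := hΞ.contDiffAt (hU.mem_nhds hx)
  -- The sup norm is not submultiplicative. The `L∞`-operator norm is, and it induces
  -- definitionally the same topology, which is all that `fderiv` depends on.
  let _ : NormedRing (Matrix (Fin 3) (Fin 3) ℝ) := Matrix.linftyOpNormedRing
  let _ : NormedAlgebra ℝ (Matrix (Fin 3) (Fin 3) ℝ) := Matrix.linftyOpNormedAlgebra
  have : HasSummableGeomSeries (Matrix (Fin 3) (Fin 3) ℝ) :=
    @instHasSummableGeomSeriesOfCompleteSpace _ _ (FiniteDimensional.complete ℝ _)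
  simp only [Matrix.nonsing_inv_eq_ringInverse]
  exact maurerCartan_ringInverse (hΞx.differentiableAt two_ne_zero) (hΞinv x hx)
    (hΞx.hasFDerivAt_fderiv_apply v).differentiableAt
    (hΞx.hasFDerivAt_fderiv_apply w).differentiableAt
    (hΞx.fderiv_fderiv_apply_comm v w)
end

section
/- Let W be a 4-dimensional real vector space, J : W → W a linear map with J∘J = −id, and ω, χ : W → ℂ real-linear maps that are complex-linear with respect to J, i.e. ω(J v) = i·ω(v) and χ(J v) = i·χ(v) for all v, and such that the map v ↦ (ω(v), χ(v)) from W to ℂ² is injective. Let Σ ⊆ W be a 2-dimensional subspace such that ω∧ω̄ does not vanish on Σ, i.e. there exist u, v ∈ Σ with ω(u)·conj(ω(v)) − ω(v)·conj(ω(u)) ≠ 0. Then Σ is J-invariant (J(Σ) = Σ) if and only if ω∧χ vanishes on Σ, i.e. ω(u)·χ(v) − ω(v)·χ(u) = 0 for all u, v ∈ Σ. (This is the pointwise content of the criterion: an immersed surface in an almost complex 4-manifold on which ω∧ω̄ is non-vanishing admits the structure of a pseudo-holomorphic curve if and only if ω∧χ pulls back to zero, where ω, χ is a basis of the (1,0)-forms.)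 -/
/-- Let `W` be a 4-dimensional real vector space, `J` a linear complex
structure on `W`, and `ω, χ : W → ℂ` real-linear `(1,0)`-forms for `J` such that
`v ↦ (ω v, χ v)` is injective. If `S ⊆ W` is a 2-dimensional subspace on which `ω∧ω̄` does
not vanish, then `Σ` is `J`-invariant, `J(S) = S`, if and only if `ω∧χ` vanishes on `Σ`. -/
theorem stmt15 (W : Type*) [AddCommGroup W] [Module ℝ W] [FiniteDimensional ℝ W]
    (hdim : Module.finrank ℝ W = 4)
    (J : W →ₗ[ℝ] W) (hJ : J ∘ₗ J = -LinearMap.id)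
    (ω χ : W →ₗ[ℝ] ℂ)
    (hω : ∀ v : W, ω (J v) = Complex.I * ω v)
    (hχ : ∀ v : W, χ (J v) = Complex.I * χ v)
    (hinj : Function.Injective (fun v : W => (ω v, χ v)))
    (S : Submodule ℝ W) (hSdim : Module.finrank ℝ S = 2)
    (hωω : ∃ u ∈ S, ∃ v ∈ S,
      ω u * (starRingEnd ℂ) (ω v) - ω v * (starRingEnd ℂ) (ω u) ≠ 0) :
    S.map J = S ↔ ∀ u ∈ S, ∀ v ∈ S, ω u * χ v - ω v * χ u = 0 := by
  classical
  obtain ⟨u₀, hu₀S, v₀, hv₀S, hD⟩ := hωω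
  have hJJ : ∀ w : W, J (J w) = -w := fun w => by
    have := LinearMap.congr_fun hJ w
    simpa using this
  have hωu₀ : ω u₀ ≠ 0 := by
    intro h; apply hD; simp [h]
  -- the values ω u₀, ω v₀ are ℝ-linearly independent in ℂ
  have hindep : LinearIndependent ℝ ![ω u₀, ω v₀] := by
    rw [LinearIndependent.pair_iff]
    intro s t hst
    have h1 : (s : ℂ) * ω u₀ + (t : ℂ) * ω v₀ = 0 := by
      simpa [Complex.real_smul] using hst
    have h2 : (s : ℂ) * (starRingEnd ℂ) (ω u₀) + (t : ℂ) * (starRingEnd ℂ) (ω v₀) = 0 := by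
      have := congrArg (starRingEnd ℂ) h1
      simpa [map_add, map_mul, Complex.conj_ofReal] using this
    have hs : (s : ℂ) = 0 := by
      have hsD : (s : ℂ) * (ω u₀ * (starRingEnd ℂ) (ω v₀) - ω v₀ * (starRingEnd ℂ) (ω u₀)) = 0 := by
        linear_combination ((starRingEnd ℂ) (ω v₀)) * h1 - (ω v₀) * h2
      rcases mul_eq_zero.mp hsD with h | h
      · exact h
      · exact absurd h hD
    have ht : (t : ℂ) = 0 := by
      have htD : (t : ℂ) * (ω u₀ * (starRingEnd ℂ) (ω v₀) - ω v₀ * (starRingEnd ℂ) (ω u₀)) = 0 := by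
        linear_combination (-((starRingEnd ℂ) (ω u₀))) * h1 + (ω u₀) * h2
      rcases mul_eq_zero.mp htD with h | h
      · exact h
      · exact absurd h hD
    exact ⟨by exact_mod_cast hs, by exact_mod_cast ht⟩
  -- the restriction of ω to S
  set f : S →ₗ[ℝ] ℂ := ω.comp S.subtype with hfdef
  have hrange : LinearMap.range f = ⊤ := by
    apply Submodule.eq_top_of_finrank_eq
    have hle : Submodule.span ℝ (Set.range ![ω u₀, ω v₀]) ≤ LinearMap.range f := by
      rw [Submodule.span_le]
      rintro z ⟨i, rfl⟩
      fin_cases i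
      · exact ⟨⟨u₀, hu₀S⟩, rfl⟩
      · exact ⟨⟨v₀, hv₀S⟩, rfl⟩
    have hsp : Module.finrank ℝ (Submodule.span ℝ (Set.range ![ω u₀, ω v₀])) = 2 := by
      rw [finrank_span_eq_card hindep]
      simp
    have h2le : 2 ≤ Module.finrank ℝ (LinearMap.range f) := by
      rw [← hsp]
      exact Submodule.finrank_mono hle
    have hle2 : Module.finrank ℝ (LinearMap.range f) ≤ 2 := by
      have := Submodule.finrank_le (LinearMap.range f)
      rwa [Complex.finrank_real_complex] at this
    rw [Complex.finrank_real_complex]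
    omega
  have hrk : Module.finrank ℝ (LinearMap.range f) = 2 := by
    rw [hrange]
    simpa using Complex.finrank_real_complex
  have hker : LinearMap.ker f = ⊥ := by
    have hrn := LinearMap.finrank_range_add_finrank_ker f
    rw [hrk, hSdim] at hrn
    exact Submodule.finrank_eq_zero.mp (by omega)
  have hfinj : Function.Injective f := LinearMap.ker_eq_bot.mp hker
  have hωinj : ∀ w₁ ∈ S, ∀ w₂ ∈ S, ω w₁ = ω w₂ → w₁ = w₂ := by
    intro w₁ h₁ w₂ h₂ h
    have : (⟨w₁, h₁⟩ : S) = ⟨w₂, h₂⟩ := hfinj (by simpa [hfdef] using h)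
    exact congrArg Subtype.val this
  have hωsurj : ∀ z : ℂ, ∃ w ∈ S, ω w = z := by
    intro z
    obtain ⟨w, hw⟩ := LinearMap.range_eq_top.mp hrange z
    exact ⟨w.1, w.2, hw⟩
  constructor
  · -- J-invariance implies ω∧χ = 0 on S
    intro hmap u hu v hv
    have hJS : ∀ w ∈ S, J w ∈ S := fun w hw => hmap ▸ Submodule.mem_map_of_mem hw
    set lam := χ u₀ / ω u₀ with hlam
    have hχu₀ : χ u₀ = lam * ω u₀ := (div_mul_cancel₀ _ hωu₀).symm
    have key : ∀ w ∈ S, χ w = lam * ω w := by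
      intro w hw
      have hc : ω w = (ω w / ω u₀) * ω u₀ := (div_mul_cancel₀ _ hωu₀).symm
      set c := ω w / ω u₀ with hcdef
      have hmem : (c.re • u₀ + c.im • J u₀ : W) ∈ S :=
        S.add_mem (S.smul_mem _ hu₀S) (S.smul_mem _ (hJS u₀ hu₀S))
      have hwe : w = c.re • u₀ + c.im • J u₀ := by
        apply hωinj w hw _ hmem
        rw [map_add, map_smul, map_smul, hω, hc, Complex.real_smul, Complex.real_smul]
        linear_combination (-(ω u₀)) * Complex.re_add_im c
      calc χ w = χ (c.re • u₀ + c.im • J u₀) := by rw [← hwe]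
        _ = (c.re : ℂ) * χ u₀ + (c.im : ℂ) * (Complex.I * χ u₀) := by
            rw [map_add, map_smul, map_smul, hχ, Complex.real_smul, Complex.real_smul]
        _ = ((c.re : ℂ) + (c.im : ℂ) * Complex.I) * χ u₀ := by ring
        _ = c * χ u₀ := by rw [Complex.re_add_im]
        _ = lam * ω w := by rw [hχu₀, hc]; ring
    rw [key u hu, key v hv]
    ring
  · -- ω∧χ = 0 on S implies J-invariance
    intro h
    set lam := χ u₀ / ω u₀ with hlam
    have key : ∀ w ∈ S, χ w = lam * ω w := by
      intro w hw
      have h0 := h u₀ hu₀S w hw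
      rw [hlam, div_mul_eq_mul_div, eq_div_iff hωu₀]
      linear_combination h0
    have hJS : ∀ w ∈ S, J w ∈ S := by
      intro w hw
      obtain ⟨w', hw'S, hw'⟩ := hωsurj (Complex.I * ω w)
      have hweq : w' = J w := by
        apply hinj
        show (ω w', χ w') = (ω (J w), χ (J w))
        refine Prod.ext ?_ ?_
        · rw [hw', hω]
        · rw [key w' hw'S, hw', hχ, key w hw]; ring
      exact hweq ▸ hw'S
    apply le_antisymm
    · rw [Submodule.map_le_iff_le_comap]
      intro w hw
      exact hJS w hw
    · intro w hw
      refine ⟨-(J w), S.neg_mem (hJS w hw), ?_⟩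
      rw [map_neg, hJJ]
      simp
end
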